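/- arXiv:2305.06120 — 3 statements merged into one kernel-verified Lean document; each statement's English description precedes it below -/
import Mathlib

section
/- Let G be a finite simple graph, M a matching in G, and P an augmenting path with respect to M with edge set E(P). Then the symmetric difference M △ E(P) is a matching in G of size |M| + 1. -/
/-- A matching in a graph `G`: a finite set of edges of `G` that are pairwise
vertex-disjoint. -/
def IsMatching {V : Type*} (G : SimpleGraph V) (M : Finset (Sym2 V)) : Prop :=
  (∀ e ∈ M, e ∈ G.edgeSet) ∧
  ∀ e ∈ M, ∀ f ∈ M, e ≠ f → ∀ v : V, v ∈ e → v ∉ f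

/-- The list of consecutive edges of a list of vertices. -/
def pathEdges {V : Type*} (vs : List V) : List (Sym2 V) :=
  (vs.zip vs.tail).map fun p => s(p.1, p.2)

/-- A vertex unmatched by `M`. -/
def Unmatched {V : Type*} (M : Finset (Sym2 V)) (x : V) : Prop := ∀ e ∈ M, x ∉ e

/-- An augmenting path with respect to a matching `M`: a path
`v₀, v₁, …, v_{2ℓ+1}` in `G` whose edges alternate between non-matching edges
(at even positions) and matching edges (at odd positions), and whose two
endpoints are unmatched by `M`. -/
def IsAugPath {V : Type*} (G : SimpleGraph V) (M : Finset (Sym2 V)) (vs : List V) : Prop :=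
  2 ≤ vs.length ∧ vs.Nodup ∧ Even vs.length ∧
  (∀ e ∈ pathEdges vs, e ∈ G.edgeSet) ∧
  (∀ (i : ℕ) (h : i < (pathEdges vs).length), ((pathEdges vs).get ⟨i, h⟩ ∈ M ↔ Odd i)) ∧
  (∀ x ∈ vs.head?, Unmatched M x) ∧ (∀ x ∈ vs.getLast?, Unmatched M x)

lemma pathEdges_length {V : Type*} (vs : List V) :
    (pathEdges vs).length = vs.length - 1 := by
  simp [pathEdges, List.length_zip]

lemma pathEdges_get {V : Type*} (vs : List V) (i : ℕ) (h : i < (pathEdges vs).length)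
    (h1 : i < vs.length) (h2 : i + 1 < vs.length) :
    (pathEdges vs).get ⟨i, h⟩ = s(vs.get ⟨i, h1⟩, vs.get ⟨i+1, h2⟩) := by
  simp [pathEdges, List.getElem_zip, List.getElem_tail]

lemma odd_count (m : ℕ) : ((Finset.range m).filter (fun i => Odd i)).card = m / 2 := by
  induction m with
  | zero => simp
  | succ k ih =>
    rw [Finset.range_add_one, Finset.filter_insert]
    by_cases h : Odd k
    · rw [if_pos h, Finset.card_insert_of_notMem (by simp), ih]
      rw [Nat.odd_iff] at h; omega
    · rw [if_neg h, ih]; rw [Nat.odd_iff] at h; omega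

lemma even_count (m : ℕ) : ((Finset.range m).filter (fun i => ¬ Odd i)).card = m - m / 2 := by
  have h := Finset.card_filter_add_card_filter_not (s := Finset.range m)
    (p := fun i => Odd i)
  simp only [odd_count, Finset.card_range] at h
  omega

/-- Augmenting along an augmenting path: the symmetric difference of a matching
`M` with the edge set of an augmenting path `P` w.r.t. `M` is again a matching,
of size `|M| + 1`. -/
theorem stmt1 {V : Type*} [Fintype V] [DecidableEq V] (G : SimpleGraph V)
    (M : Finset (Sym2 V)) (hM : IsMatching G M)
    (vs : List V) (hvs : IsAugPath G M vs) :
    IsMatching G (symmDiff M (pathEdges vs).toFinset) ∧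
    (symmDiff M (pathEdges vs).toFinset).card = M.card + 1 := by
  obtain ⟨hlen2, hnd, heven, hGedges, halt, hhead, hlast⟩ := hvs
  set n := vs.length with hn
  have hne : vs ≠ [] := List.ne_nil_of_length_pos (by omega)
  set m := (pathEdges vs).length with hm
  have hmn : m = n - 1 := pathEdges_length vs
  have hnev : n % 2 = 0 := Nat.even_iff.mp heven
  -- index bounds
  have hb1 : ∀ i, i < m → i < n := by omega
  have hb2 : ∀ i, i < m → i + 1 < n := by omega
  -- vertex injectivity
  have hinj : ∀ (i j : ℕ) (hi : i < n) (hj : j < n),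
      vs.get ⟨i, hi⟩ = vs.get ⟨j, hj⟩ → i = j := by
    intro i j hi hj h
    have hinj' := List.nodup_iff_injective_get.mp hnd
    have := @hinj' ⟨i, hi⟩ ⟨j, hj⟩ h
    exact congrArg Fin.val this
  -- endpoints unmatched
  have hu0 : Unmatched M (vs.get ⟨0, by omega⟩) := by
    apply hhead
    rw [List.head?_eq_head hne]
    simp [Option.mem_def, List.head_eq_getElem, List.get_eq_getElem]
  have hulast : Unmatched M (vs.get ⟨n - 1, by omega⟩) := by
    apply hlast
    rw [List.getLast?_eq_getLast hne, List.getLast_eq_getElem]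
    simp [Option.mem_def, List.get_eq_getElem, hn]
  -- membership in P
  have hmemP : ∀ e, e ∈ (pathEdges vs).toFinset ↔
      ∃ (i : ℕ) (h : i < m), e = (pathEdges vs).get ⟨i, h⟩ := by
    intro e
    rw [List.mem_toFinset, List.mem_iff_get]
    constructor
    · rintro ⟨⟨i, hi⟩, rfl⟩; exact ⟨i, hi, rfl⟩
    · rintro ⟨i, hi, rfl⟩; exact ⟨⟨i, hi⟩, rfl⟩
  -- vertices of an edge
  have hvert : ∀ (i : ℕ) (h : i < m) (v : V), v ∈ (pathEdges vs).get ⟨i, h⟩ ↔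
      v = vs.get ⟨i, hb1 i h⟩ ∨ v = vs.get ⟨i + 1, hb2 i h⟩ := by
    intro i h v
    rw [pathEdges_get vs i h (hb1 i h) (hb2 i h), Sym2.mem_iff]
  -- pathEdges nodup
  have hPnd : (pathEdges vs).Nodup := by
    rw [List.nodup_iff_injective_get]
    rintro ⟨i, hi⟩ ⟨j, hj⟩ hij
    rw [pathEdges_get vs i hi (hb1 i hi) (hb2 i hi),
        pathEdges_get vs j hj (hb1 j hj) (hb2 j hj), Sym2.eq_iff] at hij
    have : i = j := by
      rcases hij with ⟨h1, h2⟩ | ⟨h1, h2⟩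
      · exact hinj _ _ _ _ h1
      · have e1 := hinj _ _ _ _ h1
        have e2 := hinj _ _ _ _ h2
        omega
    simp [this]
  -- Central claim: an M-edge not in P cannot meet an even-index path edge
  have claimC : ∀ (e : Sym2 V), e ∈ M → e ∉ (pathEdges vs).toFinset →
      ∀ (i : ℕ) (h : i < m), ¬ Odd i → ∀ v, v ∈ e → v ∉ (pathEdges vs).get ⟨i, h⟩ := by
    intro e heM heP i hi hiodd v hve hvP
    rw [hvert i hi v] at hvP
    rcases hvP with rfl | rfl
    · rcases Nat.eq_zero_or_pos i with rfl | hpos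
      · exact hu0 e heM hve
      · have hi1 : i - 1 < m := by omega
        have hodd : Odd (i - 1) := by rw [Nat.odd_iff] at hiodd ⊢; omega
        have hfM : (pathEdges vs).get ⟨i - 1, hi1⟩ ∈ M := (halt (i - 1) hi1).mpr hodd
        have hef : e ≠ (pathEdges vs).get ⟨i - 1, hi1⟩ := by
          intro h; exact heP (h ▸ (hmemP e).mpr ⟨i - 1, hi1, h⟩)
        apply hM.2 e heM _ hfM hef _ hve
        rw [hvert (i-1) hi1]
        right
        exact congrArg vs.get (Fin.mk_eq_mk.mpr (by omega))
    · rcases Nat.lt_or_ge (i + 1) m with hlt | hge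
      · have hodd : Odd (i + 1) := by rw [Nat.odd_iff] at hiodd ⊢; omega
        have hfM : (pathEdges vs).get ⟨i + 1, hlt⟩ ∈ M := (halt (i + 1) hlt).mpr hodd
        have hef : e ≠ (pathEdges vs).get ⟨i + 1, hlt⟩ := by
          intro h; exact heP (h ▸ (hmemP e).mpr ⟨i + 1, hlt, h⟩)
        apply hM.2 e heM _ hfM hef _ hve
        rw [hvert (i+1) hlt]
        left; rfl
      · have : i + 1 = n - 1 := by omega
        have heq : vs.get ⟨i + 1, hb2 i hi⟩ = vs.get ⟨n - 1, (by omega : n - 1 < n)⟩ :=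
          congrArg vs.get (Fin.mk_eq_mk.mpr (by omega))
        rw [heq] at hve
        exact hulast e heM hve
  -- Two distinct even-index edges are vertex disjoint
  have claimD : ∀ (i j : ℕ) (hi : i < m) (hj : j < m), ¬ Odd i → ¬ Odd j →
      (pathEdges vs).get ⟨i, hi⟩ ≠ (pathEdges vs).get ⟨j, hj⟩ →
      ∀ v, v ∈ (pathEdges vs).get ⟨i, hi⟩ → v ∉ (pathEdges vs).get ⟨j, hj⟩ := by
    intro i j hi hj hio hjo hne v hvi hvj
    rw [hvert i hi] at hvi
    rw [hvert j hj] at hvj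
    rw [Nat.odd_iff] at hio hjo
    have hij : i ≠ j := by rintro rfl; exact hne rfl
    rcases hvi with rfl | rfl <;> rcases hvj with h | h <;>
      · have := hinj _ _ _ _ h; omega
  -- membership characterization of symmDiff
  have hsd : symmDiff M (pathEdges vs).toFinset
      = (M \ (pathEdges vs).toFinset) ∪ ((pathEdges vs).toFinset \ M) := by
    rw [symmDiff_def]; rfl
  have hmemS : ∀ e, e ∈ symmDiff M (pathEdges vs).toFinset ↔
      (e ∈ M ∧ e ∉ (pathEdges vs).toFinset) ∨ (e ∈ (pathEdges vs).toFinset ∧ e ∉ M) := by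
    intro e; rw [hsd]; simp [Finset.mem_union, Finset.mem_sdiff]
  constructor
  · constructor
    · intro e he
      rw [hmemS] at he
      rcases he with ⟨h1, _⟩ | ⟨h1, _⟩
      · exact hM.1 e h1
      · exact hGedges e (List.mem_toFinset.mp h1)
    · intro e he f hf hef v hve hvf
      rw [hmemS] at he hf
      rcases he with ⟨heM, heP⟩ | ⟨heP, heM⟩ <;> rcases hf with ⟨hfM, hfP⟩ | ⟨hfP, hfM⟩
      · exact hM.2 e heM f hfM hef v hve hvf
      · obtain ⟨j, hj, rfl⟩ := (hmemP f).mp hfP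
        have hjodd : ¬ Odd j := fun h => hfM ((halt j hj).mpr h)
        exact claimC e heM heP j hj hjodd v hve hvf
      · obtain ⟨i, hi, rfl⟩ := (hmemP e).mp heP
        have hiodd : ¬ Odd i := fun h => heM ((halt i hi).mpr h)
        exact claimC f hfM hfP i hi hiodd v hvf hve
      · obtain ⟨i, hi, rfl⟩ := (hmemP e).mp heP
        obtain ⟨j, hj, rfl⟩ := (hmemP f).mp hfP
        have hiodd : ¬ Odd i := fun h => heM ((halt i hi).mpr h)
        have hjodd : ¬ Odd j := fun h => hfM ((halt j hj).mpr h)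
        exact claimD i j hi hj hiodd hjodd hef v hve hvf
  · -- cardinality
    have hdisj : Disjoint (M \ (pathEdges vs).toFinset) ((pathEdges vs).toFinset \ M) :=
      disjoint_sdiff_sdiff
    rw [hsd, Finset.card_union_of_disjoint hdisj]
    -- card of P \ M = number of even indices
    have hcard1 : ((pathEdges vs).toFinset \ M).card
        = ((Finset.range m).filter (fun i => ¬ Odd i)).card := by
      apply Finset.card_bij (fun e _ => (pathEdges vs).idxOf e)
      · intro e he
        rw [Finset.mem_sdiff] at he
        obtain ⟨i, hi, rfl⟩ := (hmemP e).mp he.1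
        rw [Finset.mem_filter, Finset.mem_range]
        have hidx : (pathEdges vs).idxOf ((pathEdges vs).get ⟨i, hi⟩) = i :=
          List.get_idxOf hPnd _
        rw [hidx]
        exact ⟨hi, fun h => he.2 ((halt i hi).mpr h)⟩
      · intro e1 he1 e2 he2 h
        rw [Finset.mem_sdiff] at he1 he2
        have m1 := List.mem_toFinset.mp he1.1
        have m2 := List.mem_toFinset.mp he2.1
        rw [← List.idxOf_inj m1]; exact h
      · intro i hi
        rw [Finset.mem_filter, Finset.mem_range] at hi
        refine ⟨(pathEdges vs).get ⟨i, hi.1⟩, ?_, ?_⟩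
        · rw [Finset.mem_sdiff]
          exact ⟨(hmemP _).mpr ⟨i, hi.1, rfl⟩, fun h => hi.2 ((halt i hi.1).mp h)⟩
        · exact List.get_idxOf hPnd _
    have hcard2 : (M ∩ (pathEdges vs).toFinset).card
        = ((Finset.range m).filter (fun i => Odd i)).card := by
      apply Finset.card_bij (fun e _ => (pathEdges vs).idxOf e)
      · intro e he
        rw [Finset.mem_inter] at he
        obtain ⟨i, hi, rfl⟩ := (hmemP e).mp he.2
        rw [Finset.mem_filter, Finset.mem_range]
        rw [List.get_idxOf hPnd _]
        exact ⟨hi, (halt i hi).mp he.1⟩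
      · intro e1 he1 e2 he2 h
        rw [Finset.mem_inter] at he1 he2
        have m1 := List.mem_toFinset.mp he1.2
        have m2 := List.mem_toFinset.mp he2.2
        rw [← List.idxOf_inj m1]; exact h
      · intro i hi
        rw [Finset.mem_filter, Finset.mem_range] at hi
        refine ⟨(pathEdges vs).get ⟨i, hi.1⟩, ?_, List.get_idxOf hPnd _⟩
        rw [Finset.mem_inter]
        exact ⟨(halt i hi.1).mpr hi.2, (hmemP _).mpr ⟨i, hi.1, rfl⟩⟩
    have hia := Finset.card_inter_add_card_sdiff M (pathEdges vs).toFinset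
    rw [hcard1, hcard2, odd_count, even_count] at *
    omega
end

section
/- Let x : E → ℝ≥0 be a fractional matching on a finite graph G = (V, E), i.e. for every vertex v, c_v := ∑_{e ∋ v} x_e ≤ 1. Suppose additionally that for a fixed ε ∈ (0, 1/2), every edge e ∈ E has at least one endpoint v with c_v > 1 − ε. Then for any matching M* of G, |M*| ≤ (1/(1−ε)) · ∑_{v ∈ V} c_v = (2/(1−ε)) · ∑_{e ∈ E} x_e. -/
/-- If `x` is a fractional matching (every vertex value `c_v ≤ 1`) such that
every edge has a tight endpoint (`c_v > 1 − ε`), then any matching `M*`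
satisfies `|M*| ≤ (1/(1−ε)) ∑_v c_v`, and `∑_v c_v = 2 ∑_e x_e`. -/
theorem stmt3 {V : Type*} [Fintype V] [DecidableEq V] (G : SimpleGraph V)
    [DecidableRel G.Adj]
    (ε : ℝ) (hε0 : 0 < ε) (hε1 : ε < 1/2)
    (x : Sym2 V → ℝ) (hx : ∀ e, 0 ≤ x e)
    (c : V → ℝ) (hc : ∀ v, c v = ∑ e ∈ G.edgeFinset.filter (fun e => v ∈ e), x e)
    (hfrac : ∀ v, c v ≤ 1)
    (htight : ∀ e ∈ G.edgeFinset, ∃ v, v ∈ e ∧ 1 - ε < c v)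
    (Mstar : Finset (Sym2 V)) (hM : IsMatching G Mstar) :
    (Mstar.card : ℝ) ≤ (1 / (1 - ε)) * ∑ v, c v ∧
    ∑ v, c v = 2 * ∑ e ∈ G.edgeFinset, x e := by
  have hε : (0:ℝ) < 1 - ε := by linarith
  have hc0 : ∀ v, 0 ≤ c v := fun v => (hc v) ▸
    Finset.sum_nonneg (fun e _ => hx e)
  -- choose a tight vertex for each matching edge
  have hsub : ∀ e ∈ Mstar, ∃ v, v ∈ e ∧ 1 - ε < c v := fun e he =>
    htight e (SimpleGraph.mem_edgeFinset.2 (hM.1 e he))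
  have key : (1 - ε) * Mstar.card ≤ ∑ v, c v := by
    classical
    choose f hf1 hf2 using hsub
    set F : {e // e ∈ Mstar} → V := fun e => f e.1 e.2 with hF
    have hFinj : Function.Injective F := by
      intro e1 e2 h
      by_contra hne
      have hne' : e1.1 ≠ e2.1 := fun h' => hne (Subtype.ext h')
      exact hM.2 e1.1 e1.2 e2.1 e2.2 hne' (F e1) (hf1 e1.1 e1.2)
        (h ▸ hf1 e2.1 e2.2)
    have h1 : (1 - ε) * Mstar.card ≤ ∑ e ∈ Mstar.attach, c (F e) := by
      have := Finset.sum_le_sum (f := fun e : {e // e ∈ Mstar} => (1 - ε))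
        (g := fun e => c (F e)) (s := Mstar.attach)
        (fun e _ => le_of_lt (hf2 e.1 e.2))
      simp only [Finset.sum_const, Finset.card_attach, nsmul_eq_mul] at this
      linarith [this]
    have h2 : ∑ e ∈ Mstar.attach, c (F e)
        = ∑ v ∈ Mstar.attach.image F, c v := by
      rw [Finset.sum_image (fun a _ b _ h => hFinj h)]
    have h3 : ∑ v ∈ Mstar.attach.image F, c v ≤ ∑ v, c v :=
      Finset.sum_le_sum_of_subset_of_nonneg (Finset.subset_univ _)
        (fun v _ _ => hc0 v)
    linarith
  constructor
  · rw [div_mul_eq_mul_div, one_mul, le_div_iff₀ hε]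
    linarith [key]
  · -- double counting
    have : ∑ v, c v = ∑ v, ∑ e ∈ G.edgeFinset, (if v ∈ e then x e else 0) := by
      simp [hc, Finset.sum_filter]
    rw [this, Finset.sum_comm]
    rw [Finset.mul_sum]
    apply Finset.sum_congr rfl
    intro e he
    have he' : e ∈ G.edgeSet := SimpleGraph.mem_edgeFinset.1 he
    induction e using Sym2.ind with
    | _ a b =>
      have hab : a ≠ b := (G.mem_edgeSet.1 he').ne
      have hfil : (Finset.univ.filter (fun v => v ∈ s(a, b))) = {a, b} := by
        ext v; simp [Sym2.mem_iff, or_comm]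
      rw [← Finset.sum_filter, hfil, Finset.sum_pair hab]
      ring
end

section
/- Let M be a matching of a finite graph G and let M* be a maximum matching with |M*| − |M| > (ε/2)|M*| for ε ∈ (0,1). Set ℓ = 8/ε + 1. Then there exist at least (ε/4)·|M*| vertex-disjoint augmenting paths with respect to M in G, each of length at most ℓ. -/
open scoped Classical
set_option linter.unusedSectionVars false

namespace Aug18

variable {V : Type*} [DecidableEq V]

/-- uniqueness + looplessness for a partial matching edge set -/
def Uniq (N : Finset (Sym2 V)) : Prop :=
  (∀ v w w' : V, s(v,w) ∈ N → s(v,w') ∈ N → w = w') ∧ ∀ v : V, s(v,v) ∉ N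

noncomputable def pt (N : Finset (Sym2 V)) (v : V) : Option V :=
  if h : ∃ w, s(v, w) ∈ N then some h.choose else none

lemma pt_mem {N : Finset (Sym2 V)} {v w : V} (h : pt N v = some w) : s(v,w) ∈ N := by
  unfold pt at h
  split at h
  · rename_i h'; cases h; exact h'.choose_spec
  · exact absurd h (by simp)

lemma pt_eq {N : Finset (Sym2 V)} (hU : Uniq N) {v w : V} (h : s(v,w) ∈ N) :
    pt N v = some w := by
  unfold pt
  rw [dif_pos ⟨w, h⟩]
  exact congrArg _ (hU.1 v _ _ (⟨w, h⟩ : ∃ w, s(v,w) ∈ N).choose_spec h)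

lemma pt_none {N : Finset (Sym2 V)} {v : V} (h : pt N v = none) : ∀ w, s(v,w) ∉ N := by
  unfold pt at h
  split at h
  · simp at h
  · rename_i h'; push_neg at h'; exact h'

lemma pt_symm {N : Finset (Sym2 V)} (hU : Uniq N) {v w : V} (h : pt N v = some w) :
    pt N w = some v := pt_eq hU (by rw [Sym2.eq_swap]; exact pt_mem h)

def conj (s : V × Bool) : V × Bool := (s.1, !s.2)

@[simp] lemma conj_conj (s : V × Bool) : conj (conj s) = s := by simp [conj]

@[simp] lemma conj_fst (s : V × Bool) : (conj s).1 = s.1 := rfl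

noncomputable def stp (A B : Finset (Sym2 V)) (s : V × Bool) : Option (V × Bool) :=
  (pt (if s.2 then A else B) s.1).map (fun w => (w, !s.2))

lemma uniq_ite {A B : Finset (Sym2 V)} (hA : Uniq A) (hB : Uniq B) (b : Bool) :
    Uniq (if b then A else B) := by cases b <;> simpa

lemma stp_inj {A B : Finset (Sym2 V)} (hA : Uniq A) (hB : Uniq B) {a b c : V × Bool}
    (ha : stp A B a = some c) (hb : stp A B b = some c) : a = b := by
  unfold stp at ha hb
  rcases Option.map_eq_some_iff.1 ha with ⟨w, hw, hwc⟩
  rcases Option.map_eq_some_iff.1 hb with ⟨w', hw', hwc'⟩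
  subst hwc
  have hww : w' = w := (Prod.ext_iff.1 hwc').1
  have h2 : a.2 = b.2 := by
    have := (Prod.ext_iff.1 hwc').2
    simpa using this.symm
  subst hww
  rw [← h2] at hw'
  have h1 : a.1 = b.1 :=
    Option.some_injective _
      ((pt_symm (uniq_ite hA hB a.2) hw).symm.trans (pt_symm (uniq_ite hA hB a.2) hw'))
  exact Prod.ext h1 h2

lemma stp_conj {A B : Finset (Sym2 V)} (hA : Uniq A) (hB : Uniq B) {s t : V × Bool}
    (h : stp A B s = some t) : stp A B (conj t) = some (conj s) := by
  unfold stp at h ⊢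
  rcases Option.map_eq_some_iff.1 h with ⟨w, hw, hwt⟩
  subst hwt
  show (pt (if !!s.2 then A else B) w).map (fun w' => (w', !(!(!s.2)))) = some (s.1, !s.2)
  rw [Bool.not_not, Bool.not_not, pt_symm (uniq_ite hA hB s.2) hw]
  rfl

lemma stp_ne_self {A B : Finset (Sym2 V)} (hA : Uniq A) (hB : Uniq B) {s t : V × Bool}
    (h : stp A B s = some t) : t.1 ≠ s.1 := by
  unfold stp at h
  rcases Option.map_eq_some_iff.1 h with ⟨w, hw, hwt⟩
  have : t.1 = w := by rw [← hwt]
  rw [this]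
  intro hws
  subst hws
  exact (uniq_ite hA hB s.2).2 s.1 (pt_mem hw)

noncomputable def orb (A B : Finset (Sym2 V)) (s : V × Bool) : ℕ → Option (V × Bool)
  | 0 => some s
  | n+1 => (orb A B s n).bind (stp A B)

variable {A B : Finset (Sym2 V)}

lemma orb_zero (s : V × Bool) : orb A B s 0 = some s := rfl

lemma orb_succ (s : V × Bool) (n : ℕ) :
    orb A B s (n+1) = (orb A B s n).bind (stp A B) := rfl

lemma orb_succ_some {s u : V × Bool} {n : ℕ} (h : orb A B s (n+1) = some u) :
    ∃ w, orb A B s n = some w ∧ stp A B w = some u := by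
  rw [orb_succ] at h
  exact Option.bind_eq_some_iff.1 h

lemma orb_isSome_of_le {s : V × Bool} {n : ℕ} (h : (orb A B s n).isSome) :
    ∀ k ≤ n, (orb A B s k).isSome := by
  induction n with
  | zero => intro k hk; simpa [Nat.le_zero.1 hk] using h
  | succ n ih =>
    intro k hk
    rcases Nat.lt_or_ge k (n+1) with h' | h'
    · rcases Option.isSome_iff_exists.1 h with ⟨u, hu⟩
      rcases orb_succ_some hu with ⟨w, hw, -⟩
      exact ih (by rw [hw]; rfl) k (by omega)
    · have : k = n + 1 := by omega
      subst this; exact h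

lemma orb_add (s : V × Bool) (m k : ℕ) {u : V × Bool} (h : orb A B s m = some u) :
    orb A B s (m + k) = orb A B u k := by
  induction k with
  | zero => simpa [orb_zero] using h
  | succ k ih => rw [← Nat.add_assoc, orb_succ, orb_succ, ih]

end Aug18

namespace Aug18

variable {V : Type*} [DecidableEq V] {A B : Finset (Sym2 V)}

lemma stp_snd {w u : V × Bool} (h : stp A B w = some u) : u.2 = !w.2 := by
  unfold stp at h
  rcases Option.map_eq_some_iff.1 h with ⟨x, -, hxu⟩
  rw [← hxu]

lemma stp_edge {w u : V × Bool} (h : stp A B w = some u) :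
    s(w.1, u.1) ∈ (if w.2 then A else B) := by
  unfold stp at h
  rcases Option.map_eq_some_iff.1 h with ⟨x, hx, hxu⟩
  have : u.1 = x := by rw [← hxu]
  rw [this]; exact pt_mem hx

lemma orb_inj (hA : Uniq A) (hB : Uniq B) {s0 : V × Bool}
    (hs0 : ∀ a, stp A B a ≠ some s0) {u : V × Bool} :
    ∀ i j : ℕ, orb A B s0 i = some u → orb A B s0 j = some u → i = j := by
  intro i
  induction i generalizing u with
  | zero =>
    intro j hi hj
    rw [orb_zero] at hi
    cases hi
    cases j with
    | zero => rfl
    | succ j' =>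
      rcases orb_succ_some hj with ⟨w, -, hw⟩
      exact absurd hw (hs0 w)
  | succ i' ih =>
    intro j hi hj
    cases j with
    | zero =>
      rw [orb_zero] at hj
      cases hj
      rcases orb_succ_some hi with ⟨w, -, hw⟩
      exact absurd hw (hs0 w)
    | succ j' =>
      rcases orb_succ_some hi with ⟨w, hwi, hw⟩
      rcases orb_succ_some hj with ⟨w', hwj, hw'⟩
      have : w = w' := stp_inj hA hB hw hw'
      subst this
      rw [ih j' hwi hwj]

lemma orb_rev (hA : Uniq A) (hB : Uniq B) {u : V × Bool} {n : ℕ}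
    (h : orb A B u n = some (conj u)) :
    ∀ t ≤ n, orb A B u (n - t) = (orb A B u t).map conj := by
  intro t
  induction t with
  | zero => intro _; rw [Nat.sub_zero, h, orb_zero]; rfl
  | succ t ih =>
    intro ht
    have ih' := ih (by omega)
    have hsome : ∀ k ≤ n, (orb A B u k).isSome :=
      orb_isSome_of_le (by rw [h]; rfl)
    rcases Option.isSome_iff_exists.1 (hsome t (by omega)) with ⟨w, hwt⟩
    rcases Option.isSome_iff_exists.1 (hsome (t+1) ht) with ⟨w', hwt'⟩
    rcases orb_succ_some hwt' with ⟨w0, hw0, hstep⟩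
    rw [hwt] at hw0; cases hw0
    have hnt : n - t = (n - (t+1)) + 1 := by omega
    have h1 : orb A B u (n - t) = some (conj w) := by rw [ih', hwt]; rfl
    rw [hnt] at h1
    rcases orb_succ_some h1 with ⟨p, hp, hpstep⟩
    have : p = conj w' := stp_inj hA hB hpstep (stp_conj hA hB hstep)
    subst this
    rw [hp, hwt']; rfl

lemma orb_no_conj (hA : Uniq A) (hB : Uniq B) {u : V × Bool} {n : ℕ}
    (h : orb A B u n = some (conj u)) : False := by
  have hrev := orb_rev hA hB h
  have hsome : ∀ k ≤ n, (orb A B u k).isSome := orb_isSome_of_le (by rw [h]; rfl)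
  rcases Nat.even_or_odd n with he | ho
  · obtain ⟨m, rfl⟩ := he
    have h2 : m ≤ m + m := by omega
    have := hrev m h2
    have hnn : m + m - m = m := by omega
    rw [hnn] at this
    rcases Option.isSome_iff_exists.1 (hsome m h2) with ⟨w, hw⟩
    rw [hw] at this
    have : w = conj w := by simpa using this
    have := congrArg Prod.snd this
    simp [conj] at this
  · obtain ⟨m, rfl⟩ := ho
    have h2 : m + 1 ≤ 2 * m + 1 := by omega
    have := hrev (m + 1) h2
    have hnn : 2 * m + 1 - (m + 1) = m := by omega
    rw [hnn] at this
    rcases Option.isSome_iff_exists.1 (hsome m (by omega)) with ⟨w, hw⟩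
    rcases Option.isSome_iff_exists.1 (hsome (m+1) h2) with ⟨w', hw'⟩
    rcases orb_succ_some hw' with ⟨w0, hw0, hstep⟩
    rw [hw] at hw0; cases hw0
    rw [hw, hw'] at this
    have hww : w = conj w' := by simpa using this
    have : w'.1 = w.1 := by rw [hww]; rfl
    exact stp_ne_self hA hB hstep this

lemma orb_fst_inj (hA : Uniq A) (hB : Uniq B) {s0 : V × Bool}
    (hs0 : ∀ a, stp A B a ≠ some s0) {u u' : V × Bool} {i j : ℕ}
    (hi : orb A B s0 i = some u) (hj : orb A B s0 j = some u')
    (hfst : u.1 = u'.1) : i = j := by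
  rcases Bool.eq_or_eq_not u'.2 u.2 with h2 | h2
  · have : u' = u := Prod.ext hfst.symm h2
    subst this
    exact (orb_inj hA hB hs0 i j hi hj).symm ▸ rfl
  · have hcon : u' = conj u := Prod.ext hfst.symm (by simpa [conj] using h2)
    subst hcon
    rcases le_or_gt i j with hij | hij
    · have := orb_add (A := A) (B := B) s0 i (j - i) hi
      rw [Nat.add_sub_cancel' hij, hj] at this
      exact absurd this.symm (fun hh => orb_no_conj hA hB hh)
    · have := orb_add (A := A) (B := B) s0 j (i - j) hj
      rw [Nat.add_sub_cancel' (Nat.le_of_lt hij), hi] at this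
      have h3 : orb A B (conj u) (i - j) = some (conj (conj u)) := by
        rw [← this, conj_conj]
      exact absurd h3 (fun hh => orb_no_conj hA hB hh)

lemma orb_snd {v : V} {k : ℕ} {u : V × Bool} (h : orb A B (v, true) k = some u) :
    (u.2 = true ↔ Even k) := by
  induction k generalizing u with
  | zero => rw [orb_zero] at h; cases h; simp
  | succ k ih =>
    rcases orb_succ_some h with ⟨w, hw, hstep⟩
    have h2 := stp_snd hstep
    have ihw := ih hw
    rw [h2, Nat.even_add_one]
    cases hb : w.2 <;> simp [hb] at ihw ⊢ <;> simpa using ihw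

lemma orb_term [Fintype V] (hA : Uniq A) (hB : Uniq B) {s0 : V × Bool}
    (hs0 : ∀ a, stp A B a ≠ some s0) : ∃ n, orb A B s0 n = none := by
  by_contra hcon
  push_neg at hcon
  have hsome : ∀ n, (orb A B s0 n).isSome := fun n =>
    Option.isSome_iff_ne_none.2 (hcon n)
  have hinj : Function.Injective
      (fun k : Fin (2 * Fintype.card V + 1) => (orb A B s0 k).get (hsome k)) := by
    intro a b hab
    simp only at hab
    have ha : orb A B s0 a = some ((orb A B s0 b).get (hsome b)) :=
      (Option.some_get (hsome a)).symm.trans (congrArg some hab)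
    have hb : orb A B s0 b = some ((orb A B s0 b).get (hsome b)) :=
      (Option.some_get (hsome b)).symm
    exact Fin.ext (orb_inj hA hB hs0 a b ha hb)
  have := Fintype.card_le_of_injective _ hinj
  simp [Fintype.card_prod] at this
  omega

end Aug18

namespace Aug18

variable {V : Type*} [DecidableEq V] {A B : Finset (Sym2 V)} {x : V}

lemma orb_conj (hA : Uniq A) (hB : Uniq B) {s u : V × Bool} {i : ℕ}
    (h : orb A B s i = some u) : orb A B (conj u) i = some (conj s) := by
  induction i generalizing u with
  | zero => rw [orb_zero] at h; cases h; rfl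
  | succ i ih =>
    rcases orb_succ_some h with ⟨w, hw, hstep⟩
    have h1 : orb A B (conj u) 1 = some (conj w) := by
      rw [orb_succ, orb_zero, Option.bind_some]
      exact stp_conj hA hB hstep
    have := orb_add (A := A) (B := B) (conj u) 1 i h1
    rw [Nat.add_comm] at this
    rw [this]
    exact ih hw

lemma orb_back (hA : Uniq A) (hB : Uniq B) {s t u : V × Bool} {i j : ℕ}
    (hi : orb A B s i = some u) (hj : orb A B t j = some u) (hij : i ≤ j) :
    orb A B t (j - i) = some s := by
  induction i generalizing u j with
  | zero => rw [orb_zero] at hi; cases hi; simpa using hj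
  | succ i ih =>
    rcases orb_succ_some hi with ⟨w, hw, hstep⟩
    have hj1 : j - 1 + 1 = j := by omega
    rcases orb_succ_some (hj1 ▸ hj) with ⟨w', hw', hstep'⟩
    have : w' = w := stp_inj hA hB hstep' hstep
    subst this
    have := ih hw hw' (by omega)
    have hjj : j - 1 - i = j - (i+1) := by omega
    rwa [hjj] at this

noncomputable def len (A B : Finset (Sym2 V)) (x : V) : ℕ :=
  if h : ∃ n, orb A B (x, true) n = none then Nat.find h else 0

noncomputable def vert (A B : Finset (Sym2 V)) (x : V) (k : ℕ) : V :=
  ((orb A B (x, true) k).getD (x, true)).1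

noncomputable def pth (A B : Finset (Sym2 V)) (x : V) : List V :=
  (List.range (len A B x)).map (vert A B x)

lemma len_spec (hex : ∃ n, orb A B (x, true) n = none) :
    orb A B (x, true) (len A B x) = none := by
  rw [len, dif_pos hex]; exact Nat.find_spec hex

lemma orb_lt_isSome (hex : ∃ n, orb A B (x, true) n = none) {k : ℕ}
    (hk : k < len A B x) : (orb A B (x, true) k).isSome := by
  rw [len, dif_pos hex] at hk
  exact Option.isSome_iff_ne_none.2 (Nat.find_min hex hk)

lemma len_pos (hex : ∃ n, orb A B (x, true) n = none) : 0 < len A B x := by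
  rcases Nat.eq_zero_or_pos (len A B x) with h | h
  · have := len_spec hex; rw [h, orb_zero] at this; cases this
  · exact h

lemma len_eq (hex : ∃ n, orb A B (x, true) n = none) {n : ℕ}
    (hn : orb A B (x, true) n = none) (hmin : ∀ k < n, orb A B (x, true) k ≠ none) :
    len A B x = n := by
  rw [len, dif_pos hex]
  exact le_antisymm (Nat.find_min' hex hn)
    (Nat.le_of_not_lt fun h => hmin _ h (Nat.find_spec hex))

lemma vert_eq {k : ℕ} {u : V × Bool} (h : orb A B (x, true) k = some u) :
    vert A B x k = u.1 := by rw [vert, h]; rfl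

lemma vert_zero : vert A B x 0 = x := rfl

lemma pth_length : (pth A B x).length = len A B x := by simp [pth]

lemma pth_get {k : ℕ} (hk : k < (pth A B x).length) :
    (pth A B x).get ⟨k, hk⟩ = vert A B x k := by simp [pth]

lemma pth_nodup (hA : Uniq A) (hB : Uniq B)
    (hex : ∃ n, orb A B (x, true) n = none)
    (hs0 : ∀ a, stp A B a ≠ some (x, true)) : (pth A B x).Nodup := by
  refine List.Nodup.map_on ?_ List.nodup_range
  intro i hi j hj hij
  rw [List.mem_range] at hi hj
  rcases Option.isSome_iff_exists.1 (orb_lt_isSome hex hi) with ⟨u, hu⟩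
  rcases Option.isSome_iff_exists.1 (orb_lt_isSome hex hj) with ⟨u', hu'⟩
  rw [vert_eq hu, vert_eq hu'] at hij
  exact orb_fst_inj hA hB hs0 hu hu' hij

lemma orb_edge (hex : ∃ n, orb A B (x, true) n = none) {k : ℕ}
    (hk : k + 1 < len A B x) :
    s(vert A B x k, vert A B x (k+1)) ∈ (if Even k then A else B) := by
  rcases Option.isSome_iff_exists.1 (orb_lt_isSome hex (by omega : k < len A B x)) with ⟨u, hu⟩
  rcases Option.isSome_iff_exists.1 (orb_lt_isSome hex hk) with ⟨u', hu'⟩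
  rcases orb_succ_some hu' with ⟨w, hw, hstep⟩
  rw [hu] at hw; cases hw
  rw [vert_eq hu, vert_eq hu']
  have hedge := stp_edge hstep
  have hsnd := orb_snd hu
  by_cases he : Even k
  · have : u.2 = true := hsnd.2 he
    rw [this] at hedge; rw [if_pos he]; simpa using hedge
  · have : u.2 = false := by
      cases hb : u.2
      · rfl
      · exact absurd (hsnd.1 hb) he
    rw [this] at hedge; rw [if_neg he]; simpa using hedge

lemma orb_last_stp (hex : ∃ n, orb A B (x, true) n = none) {u : V × Bool}
    (hu : orb A B (x, true) (len A B x - 1) = some u) : stp A B u = none := by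
  have h1 : len A B x - 1 + 1 = len A B x := by have := len_pos hex; omega
  have := len_spec hex
  rw [← h1, orb_succ, hu, Option.bind_some] at this
  exact this

end Aug18


namespace Aug18

variable {V : Type*} [DecidableEq V]

lemma pathEdges_length (vs : List V) : (pathEdges vs).length = vs.length - 1 := by
  simp [pathEdges, List.length_zip, List.length_tail]

lemma pathEdges_get (vs : List V) {i : ℕ} (h : i < (pathEdges vs).length)
    (h1 : i < vs.length) (h2 : i + 1 < vs.length) :
    (pathEdges vs).get ⟨i, h⟩ = s(vs.get ⟨i, h1⟩, vs.get ⟨i+1, h2⟩) := by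
  simp only [pathEdges, List.get_eq_getElem, List.getElem_map, List.getElem_zip]
  congr 1
  rw [List.getElem_tail]

lemma mem_pathEdges {vs : List V} {e : Sym2 V} (h : e ∈ pathEdges vs) :
    ∃ i : ℕ, ∃ h1 : i < vs.length, ∃ h2 : i + 1 < vs.length,
      e = s(vs.get ⟨i, h1⟩, vs.get ⟨i+1, h2⟩) := by
  rcases List.mem_iff_get.1 h with ⟨⟨i, hi⟩, hget⟩
  have hlen := pathEdges_length vs
  have h1 : i < vs.length := by omega
  have h2 : i + 1 < vs.length := by omega
  exact ⟨i, h1, h2, by rw [← hget, pathEdges_get vs hi h1 h2]⟩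

end Aug18

namespace Aug18

variable {V : Type*} [Fintype V] [DecidableEq V]

/-- vertices of an edge as a finset -/
noncomputable def eV (e : Sym2 V) : Finset V := Finset.univ.filter (· ∈ e)

@[simp] lemma mem_eV {e : Sym2 V} {v : V} : v ∈ eV e ↔ v ∈ e := by
  simp [eV]

lemma card_eV {e : Sym2 V} (h : ¬ e.IsDiag) : (eV e).card = 2 := by
  induction e with
  | _ a b =>
    have hab : a ≠ b := by simpa [Sym2.mk_isDiag_iff] using h
    have : eV s(a,b) = {a, b} := by
      ext v; simp [Sym2.mem_iff]
    rw [this, Finset.card_insert_of_notMem (by simpa using hab), Finset.card_singleton]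

/-- support of a set of edges -/
noncomputable def supp (N : Finset (Sym2 V)) : Finset V :=
  Finset.univ.filter (fun v => ∃ e ∈ N, v ∈ e)

@[simp] lemma mem_supp {N : Finset (Sym2 V)} {v : V} :
    v ∈ supp N ↔ ∃ e ∈ N, v ∈ e := by simp [supp]

lemma card_supp {N : Finset (Sym2 V)} (hdiag : ∀ e ∈ N, ¬ e.IsDiag)
    (hdisj : ∀ e ∈ N, ∀ f ∈ N, e ≠ f → ∀ v : V, v ∈ e → v ∉ f) :
    (supp N).card = 2 * N.card := by
  have : supp N = N.biUnion eV := by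
    ext v; simp
  rw [this, Finset.card_biUnion]
  · rw [Finset.sum_congr rfl fun e he => card_eV (hdiag e he), Finset.sum_const,
      smul_eq_mul, Nat.mul_comm]
  · intro e he f hf hef
    simp only [Finset.disjoint_left, mem_eV]
    intro v hv hvf
    exact hdisj e he f hf hef v hv hvf

end Aug18

namespace Aug18

variable {V : Type*} [DecidableEq V]

lemma stp_true (A B : Finset (Sym2 V)) (v : V) :
    stp A B (v, true) = (pt A v).map (fun w => (w, false)) := rfl

lemma stp_false_eq (A B : Finset (Sym2 V)) (v : V) :
    stp A B (v, false) = (pt B v).map (fun w => (w, true)) := rfl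

lemma stp_none_pt {A B : Finset (Sym2 V)} {u : V × Bool} (h : stp A B u = none) :
    pt (if u.2 then A else B) u.1 = none := Option.map_eq_none_iff.1 h

lemma head?_eq_get {α : Type*} {l : List α} (h : 0 < l.length) :
    l.head? = some (l.get ⟨0, h⟩) := by
  cases l with
  | nil => simp at h
  | cons a t => rfl

lemma getLast?_eq_get {α : Type*} {l : List α} (h : 0 < l.length) :
    l.getLast? = some (l.get ⟨l.length - 1, by omega⟩) := by
  rw [List.getLast?_eq_getLast_of_ne_nil (List.length_pos_iff.1 h)]
  congr 1
  rw [List.getLast_eq_getElem, List.get_eq_getElem]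

end Aug18

/-- If `M*` is a maximum matching and `|M*| − |M| > (ε/2)|M*|`, then there are
at least `(ε/4)|M*|` vertex-disjoint augmenting paths with respect to `M`, each
of length at most `8/ε + 1`. -/
theorem stmt18 {V : Type*} [Fintype V] [DecidableEq V] (G : SimpleGraph V)
    (Mstar M : Finset (Sym2 V)) (ε : ℝ) (hε0 : 0 < ε) (hε1 : ε < 1)
    (hMstar : IsMatching G Mstar)
    (hmax : ∀ M' : Finset (Sym2 V), IsMatching G M' → M'.card ≤ Mstar.card)
    (hM : IsMatching G M)
    (hgt : (ε / 2) * (Mstar.card : ℝ) < (Mstar.card : ℝ) - (M.card : ℝ)) :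
    ∃ S : Finset (List V),
      (ε / 4) * (Mstar.card : ℝ) ≤ (S.card : ℝ) ∧
      (∀ vs ∈ S, IsAugPath G M vs ∧ ((vs.length : ℝ) - 1 ≤ 8 / ε + 1)) ∧
      (∀ vs ∈ S, ∀ ws ∈ S, vs ≠ ws → ∀ x ∈ vs, x ∉ ws) := by
  classical
  obtain ⟨hMsE, hMsD⟩ := hMstar
  obtain ⟨hME, hMD⟩ := hM
  set A : Finset (Sym2 V) := Mstar \ M with hAdef
  set B : Finset (Sym2 V) := M \ Mstar with hBdef
  -- uniqueness structures
  have huniq : ∀ (N : Finset (Sym2 V)), (∀ e ∈ N, e ∈ G.edgeSet) →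
      (∀ e ∈ N, ∀ f ∈ N, e ≠ f → ∀ v : V, v ∈ e → v ∉ f) → Aug18.Uniq N := by
    intro N hE hD
    constructor
    · intro v w w' h1 h2
      by_cases hef : s(v,w) = s(v,w')
      · exact (Sym2.congr_right).1 hef
      · exact absurd (Sym2.mem_mk_left v w') (hD _ h1 _ h2 hef v (Sym2.mem_mk_left v w))
    · intro v hv
      exact (G.not_isDiag_of_mem_edgeSet (hE _ hv)) (by simp)
  have hUMs : Aug18.Uniq Mstar := huniq Mstar hMsE hMsD
  have hUM : Aug18.Uniq M := huniq M hME hMD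
  have hUA : Aug18.Uniq A := by
    refine ⟨fun v w w' h1 h2 => hUMs.1 v w w' ?_ ?_, fun v hv => hUMs.2 v ?_⟩ <;>
      first
        | exact Finset.sdiff_subset h1
        | exact Finset.sdiff_subset h2
        | exact Finset.sdiff_subset hv
  have hUB : Aug18.Uniq B := by
    refine ⟨fun v w w' h1 h2 => hUM.1 v w w' ?_ ?_, fun v hv => hUM.2 v ?_⟩ <;>
      first
        | exact Finset.sdiff_subset h1
        | exact Finset.sdiff_subset h2
        | exact Finset.sdiff_subset hv
  set X : Finset V :=
    Finset.univ.filter (fun v => (∃ e ∈ Mstar, v ∈ e) ∧ ∀ e ∈ M, v ∉ e) with hXdef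
  set Y : Finset V :=
    Finset.univ.filter (fun v => (∃ e ∈ M, v ∈ e) ∧ ∀ e ∈ Mstar, v ∉ e) with hYdef
  have hmemX : ∀ {v : V}, v ∈ X ↔ (∃ e ∈ Mstar, v ∈ e) ∧ ∀ e ∈ M, v ∉ e := by
    intro v; simp [hXdef]
  have hmemY : ∀ {v : V}, v ∈ Y ↔ (∃ e ∈ M, v ∈ e) ∧ ∀ e ∈ Mstar, v ∉ e := by
    intro v; simp [hYdef]
  -- no preimage of start states
  have hs0 : ∀ x ∈ X, ∀ a, Aug18.stp A B a ≠ some (x, true) := by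
    intro x hx a ha
    have h2 := Aug18.stp_snd ha
    have hedge := Aug18.stp_edge ha
    have ha2 : a.2 = false := by
      rcases Bool.eq_false_or_eq_true a.2 with h | h
      · rw [h] at h2; simp at h2
      · exact h
    rw [ha2, if_neg (by simp)] at hedge
    exact (hmemX.1 hx).2 _ (Finset.sdiff_subset hedge) (by simp)
  have hex : ∀ x ∈ X, ∃ n, Aug18.orb A B (x, true) n = none := by
    intro x hx
    exact Aug18.orb_term hUA hUB (hs0 x hx)
  -- abbreviations
  have hstp_false : ∀ x ∈ X, Aug18.stp A B (x, false) = none := by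
    intro x hx
    have : Aug18.pt B x = none := by
      unfold Aug18.pt
      rw [dif_neg]
      push_neg
      intro w hw
      exact (hmemX.1 hx).2 _ (Finset.sdiff_subset hw) (by simp)
    unfold Aug18.stp
    simp [this]
  have hlen2 : ∀ x ∈ X, 2 ≤ Aug18.len A B x := by
    intro x hx
    obtain ⟨e, he, hxe⟩ := (hmemX.1 hx).1
    obtain ⟨w, rfl⟩ := Sym2.mem_iff_exists.1 hxe
    have heA : s(x, w) ∈ A :=
      Finset.mem_sdiff.2 ⟨he, fun hmem => (hmemX.1 hx).2 _ hmem (Sym2.mem_mk_left x w)⟩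
    have h1 : Aug18.orb A B (x, true) 1 = some (w, false) := by
      rw [Aug18.orb_succ, Aug18.orb_zero, Option.bind_some, Aug18.stp_true,
        Aug18.pt_eq hUA heA]
      rfl
    by_contra hcon
    push_neg at hcon
    have hspec := Aug18.len_spec (hex x hx)
    have : Aug18.len A B x = 0 ∨ Aug18.len A B x = 1 := by omega
    rcases this with h | h
    · rw [h, Aug18.orb_zero] at hspec; cases hspec
    · rw [h, h1] at hspec; cases hspec
  -- the final state
  have hfin : ∀ x ∈ X, ∃ u : V × Bool,
      Aug18.orb A B (x, true) (Aug18.len A B x - 1) = some u ∧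
      Aug18.stp A B u = none ∧ (u.2 = true ↔ Even (Aug18.len A B x - 1)) := by
    intro x hx
    have hpos := Aug18.len_pos (hex x hx)
    rcases Option.isSome_iff_exists.1
      (Aug18.orb_lt_isSome (hex x hx) (by omega : Aug18.len A B x - 1 < Aug18.len A B x))
      with ⟨u, hu⟩
    exact ⟨u, hu, Aug18.orb_last_stp (hex x hx) hu, Aug18.orb_snd hu⟩
  -- endpoint
  set endp : V → V := fun x => Aug18.vert A B x (Aug18.len A B x - 1) with hendp
  -- even-length walks end in X, unmatched
  have heven_end : ∀ x ∈ X, Even (Aug18.len A B x) → endp x ∈ X := by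
    intro x hx hev
    have hx2 := hlen2 x hx
    obtain ⟨u, hu, hstp, hpar⟩ := hfin x hx
    have hu2 : u.2 = false := by
      have hne : ¬ Even (Aug18.len A B x - 1) := by
        rintro ⟨m, hm⟩; rcases hev with ⟨r, hr⟩; omega
      cases hb : u.2
      · rfl
      · exact absurd (hpar.1 hb) hne
    have hz : Aug18.vert A B x (Aug18.len A B x - 1) = u.1 := Aug18.vert_eq hu
    have hptB : Aug18.pt B u.1 = none := by
      have := Aug18.stp_none_pt hstp
      rwa [hu2, if_neg (by simp)] at this
    have hnoB : ∀ w, s(u.1, w) ∉ B := Aug18.pt_none hptB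
    have hevk : Even (Aug18.len A B x - 2) := by
      rcases hev with ⟨r, hr⟩; exact ⟨r - 1, by omega⟩
    have hlast := Aug18.orb_edge (hex x hx)
      (by omega : (Aug18.len A B x - 2) + 1 < Aug18.len A B x)
    rw [if_pos hevk] at hlast
    have hidx : Aug18.len A B x - 2 + 1 = Aug18.len A B x - 1 := by omega
    rw [hidx] at hlast
    rw [hz] at hlast
    simp only [hendp]
    rw [hz]
    have hlastMs : s(Aug18.vert A B x (Aug18.len A B x - 2), u.1) ∈ Mstar :=
      (Finset.mem_sdiff.1 hlast).1
    have hlastnM : s(Aug18.vert A B x (Aug18.len A B x - 2), u.1) ∉ M :=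
      (Finset.mem_sdiff.1 hlast).2
    refine hmemX.2 ⟨⟨_, hlastMs, Sym2.mem_mk_right _ _⟩, ?_⟩
    intro e he hue
    obtain ⟨w, rfl⟩ := Sym2.mem_iff_exists.1 hue
    have heMs : s(u.1, w) ∈ Mstar := by
      by_contra hno
      exact hnoB w (Finset.mem_sdiff.2 ⟨he, hno⟩)
    have hnel : s(u.1, w) ≠ s(Aug18.vert A B x (Aug18.len A B x - 2), u.1) := by
      intro hh; rw [hh] at he; exact hlastnM he
    exact hMsD _ heMs _ hlastMs hnel u.1 (Sym2.mem_mk_left _ _) (Sym2.mem_mk_right _ _)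
  -- odd-length walks end in Y
  have hodd_end : ∀ x ∈ X, ¬ Even (Aug18.len A B x) → endp x ∈ Y := by
    intro x hx hev
    have hx2 := hlen2 x hx
    obtain ⟨u, hu, hstp, hpar⟩ := hfin x hx
    have hu2 : u.2 = true := by
      apply hpar.2
      rcases Nat.even_or_odd (Aug18.len A B x) with h | h
      · exact absurd h hev
      · rcases h with ⟨m, hm⟩; exact ⟨m, by omega⟩
    have hz : Aug18.vert A B x (Aug18.len A B x - 1) = u.1 := Aug18.vert_eq hu
    have hptA : Aug18.pt A u.1 = none := by
      have := Aug18.stp_none_pt hstp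
      rwa [hu2, if_pos rfl] at this
    have hnoA : ∀ w, s(u.1, w) ∉ A := Aug18.pt_none hptA
    have hoddk : ¬ Even (Aug18.len A B x - 2) := by
      rintro ⟨r, hr⟩
      rcases Nat.even_or_odd (Aug18.len A B x) with h | h
      · exact hev h
      · rcases h with ⟨m, hm⟩; omega
    have hlast := Aug18.orb_edge (hex x hx)
      (by omega : (Aug18.len A B x - 2) + 1 < Aug18.len A B x)
    rw [if_neg hoddk] at hlast
    have hidx : Aug18.len A B x - 2 + 1 = Aug18.len A B x - 1 := by omega
    rw [hidx] at hlast
    rw [hz] at hlast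
    simp only [hendp]
    rw [hz]
    have hlastM : s(Aug18.vert A B x (Aug18.len A B x - 2), u.1) ∈ M :=
      (Finset.mem_sdiff.1 hlast).1
    have hlastnMs : s(Aug18.vert A B x (Aug18.len A B x - 2), u.1) ∉ Mstar :=
      (Finset.mem_sdiff.1 hlast).2
    refine hmemY.2 ⟨⟨_, hlastM, Sym2.mem_mk_right _ _⟩, ?_⟩
    intro e he hue
    obtain ⟨w, rfl⟩ := Sym2.mem_iff_exists.1 hue
    have heM : s(u.1, w) ∈ M := by
      by_contra hno
      exact hnoA w (Finset.mem_sdiff.2 ⟨he, hno⟩)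
    have hnel : s(u.1, w) ≠ s(Aug18.vert A B x (Aug18.len A B x - 2), u.1) := by
      intro hh; rw [hh] at he; exact hlastnMs he
    exact hMD _ heM _ hlastM hnel u.1 (Sym2.mem_mk_left _ _) (Sym2.mem_mk_right _ _)
  set Xa : Finset V := X.filter (fun x => Even (Aug18.len A B x)) with hXadef
  set Xodd : Finset V := X.filter (fun x => ¬ Even (Aug18.len A B x)) with hXodef
  -- reversal facts for even walks
  have hrev : ∀ x ∈ Xa, Aug18.len A B (endp x) = Aug18.len A B x ∧ endp (endp x) = x := by
    intro x hxa
    obtain ⟨hx, hev⟩ := Finset.mem_filter.1 (hXadef ▸ hxa)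
    have hx2 := hlen2 x hx
    obtain ⟨u, hu, hstp, hpar⟩ := hfin x hx
    have hu2 : u.2 = false := by
      have hne : ¬ Even (Aug18.len A B x - 1) := by
        rintro ⟨m, hm⟩; rcases hev with ⟨r, hr⟩; omega
      cases hb : u.2
      · rfl
      · exact absurd (hpar.1 hb) hne
    have hz : Aug18.vert A B x (Aug18.len A B x - 1) = u.1 := Aug18.vert_eq hu
    have hzX : endp x ∈ X := heven_end x hx hev
    have hue : u = (endp x, false) := by
      refine Prod.ext ?_ hu2
      simp only [hendp]; rw [hz]
    have hconj : Aug18.conj u = (endp x, true) := by rw [hue]; rfl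
    have horb : Aug18.orb A B (endp x, true) (Aug18.len A B x - 1) = some (x, false) := by
      have := Aug18.orb_conj hUA hUB hu
      rw [hconj] at this
      exact this
    have hnone : Aug18.orb A B (endp x, true) (Aug18.len A B x) = none := by
      have h1 : Aug18.len A B x - 1 + 1 = Aug18.len A B x := by omega
      rw [← h1, Aug18.orb_succ, horb, Option.bind_some]
      exact hstp_false x hx
    have hmin : ∀ k < Aug18.len A B x, Aug18.orb A B (endp x, true) k ≠ none := by
      intro k hk
      exact Option.isSome_iff_ne_none.1
        (Aug18.orb_isSome_of_le (by rw [horb]; rfl) k (by omega))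
    have hlenz : Aug18.len A B (endp x) = Aug18.len A B x :=
      Aug18.len_eq (hex _ hzX) hnone hmin
    refine ⟨hlenz, ?_⟩
    have : Aug18.vert A B (endp x) (Aug18.len A B x - 1) = x := Aug18.vert_eq horb
    simp only [hendp]
    rw [hlenz]
    exact this
  have hendne : ∀ x ∈ Xa, endp x ≠ x := by
    intro x hxa
    obtain ⟨hx, hev⟩ := Finset.mem_filter.1 (hXadef ▸ hxa)
    have hx2 := hlen2 x hx
    obtain ⟨u, hu, -, -⟩ := hfin x hx
    intro hcon
    have hz : Aug18.vert A B x (Aug18.len A B x - 1) = u.1 := Aug18.vert_eq hu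
    have hfst : u.1 = ((x, true) : V × Bool).1 := by
      rw [← hz]
      simp only [hendp] at hcon
      exact hcon
    have := Aug18.orb_fst_inj hUA hUB (hs0 x hx) hu (Aug18.orb_zero (x, true)) hfst
    omega
  have hendXa : ∀ x ∈ Xa, endp x ∈ Xa := by
    intro x hx
    rw [hXadef, Finset.mem_filter] at hx ⊢
    exact ⟨heven_end x hx.1 hx.2, by rw [(hrev x (by rw [hXadef, Finset.mem_filter]; exact hx)).1]; exact hx.2⟩
  -- injectivity of endp on odd walks
  have hoddfacts : ∀ x ∈ Xodd,
      Aug18.orb A B (endp x, false) (Aug18.len A B x - 1) = some (x, false) ∧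
      Aug18.orb A B (endp x, false) (Aug18.len A B x) = none := by
    intro x hxo
    obtain ⟨hx, hodd⟩ := Finset.mem_filter.1 (hXodef ▸ hxo)
    have hx2 := hlen2 x hx
    obtain ⟨u, hu, hstp, hpar⟩ := hfin x hx
    have hu2 : u.2 = true := by
      apply hpar.2
      rcases Nat.even_or_odd (Aug18.len A B x) with h | h
      · exact absurd h hodd
      · rcases h with ⟨m, hm⟩; exact ⟨m, by omega⟩
    have hz : Aug18.vert A B x (Aug18.len A B x - 1) = u.1 := Aug18.vert_eq hu
    have hue : u = (endp x, true) := by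
      refine Prod.ext ?_ hu2
      simp only [hendp]; rw [hz]
    have hconj : Aug18.conj u = (endp x, false) := by rw [hue]; rfl
    have horb : Aug18.orb A B (endp x, false) (Aug18.len A B x - 1) = some (x, false) := by
      have := Aug18.orb_conj hUA hUB hu
      rw [hconj] at this
      exact this
    refine ⟨horb, ?_⟩
    have h1 : Aug18.len A B x - 1 + 1 = Aug18.len A B x := by omega
    rw [← h1, Aug18.orb_succ, horb, Option.bind_some]
    exact hstp_false x hx
  have hoddinj : ∀ x ∈ Xodd, ∀ x' ∈ Xodd, endp x = endp x' → x = x' := by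
    intro x hxo x' hxo' heq
    obtain ⟨h1, h2⟩ := hoddfacts x hxo
    obtain ⟨h1', h2'⟩ := hoddfacts x' hxo'
    rw [heq] at h1 h2
    have hxX := (Finset.mem_filter.1 (hXodef ▸ hxo)).1
    have hxX' := (Finset.mem_filter.1 (hXodef ▸ hxo')).1
    have hx2 := hlen2 x hxX
    have hx2' := hlen2 x' hxX'
    rcases Nat.lt_trichotomy (Aug18.len A B x) (Aug18.len A B x') with h | h | h
    · exfalso
      have := Aug18.orb_isSome_of_le (by rw [h1']; rfl) (Aug18.len A B x) (by omega)
      rw [h2] at this; cases this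
    · rw [h, h1'] at h1
      cases h1
      rfl
    · exfalso
      have := Aug18.orb_isSome_of_le (by rw [h1]; rfl) (Aug18.len A B x') (by omega)
      rw [h2'] at this; cases this
  have hcardodd : Xodd.card ≤ Y.card := by
    apply Finset.card_le_card_of_injOn endp
    · intro x hx; exact hodd_end x (Finset.mem_filter.1 hx).1 (Finset.mem_filter.1 hx).2
    · intro x hx x' hx' h; exact hoddinj x hx x' hx' h
  -- counting |X|, |Y|
  have hcardX : X.card + 2 * M.card = Y.card + 2 * Mstar.card := by
    have h1 : X = Aug18.supp Mstar \ Aug18.supp M := by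
      ext v
      simp only [hXdef, Finset.mem_filter, Finset.mem_univ, true_and, Finset.mem_sdiff,
        Aug18.mem_supp]
      constructor
      · rintro ⟨h1, h2⟩
        exact ⟨h1, by push_neg; exact h2⟩
      · rintro ⟨h1, h2⟩
        push_neg at h2
        exact ⟨h1, h2⟩
    have h2 : Y = Aug18.supp M \ Aug18.supp Mstar := by
      ext v
      simp only [hYdef, Finset.mem_filter, Finset.mem_univ, true_and, Finset.mem_sdiff,
        Aug18.mem_supp]
      constructor
      · rintro ⟨h1, h2⟩
        exact ⟨h1, by push_neg; exact h2⟩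
      · rintro ⟨h1, h2⟩
        push_neg at h2
        exact ⟨h1, h2⟩
    have hsM : (Aug18.supp M).card = 2 * M.card :=
      Aug18.card_supp (fun e he => G.not_isDiag_of_mem_edgeSet (hME e he)) hMD
    have hsMs : (Aug18.supp Mstar).card = 2 * Mstar.card :=
      Aug18.card_supp (fun e he => G.not_isDiag_of_mem_edgeSet (hMsE e he)) hMsD
    have e1 := Finset.card_sdiff_add_card_inter (Aug18.supp Mstar) (Aug18.supp M)
    have e2 := Finset.card_sdiff_add_card_inter (Aug18.supp M) (Aug18.supp Mstar)
    have einter : (Aug18.supp Mstar ∩ Aug18.supp M).card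
        = (Aug18.supp M ∩ Aug18.supp Mstar).card := by rw [Finset.inter_comm]
    rw [← h1] at e1
    rw [← h2] at e2
    omega
  have hXsplit : Xa.card + Xodd.card = X.card := by
    rw [hXadef, hXodef]
    exact Finset.card_filter_add_card_filter_not _
  have hXa2 : Xa.card + 2 * M.card ≥ 2 * Mstar.card := by omega
  -- pick representatives
  set pi : V → ℕ := fun v => (Fintype.equivFin V v : ℕ) with hpidef
  have hpiinj : ∀ v w : V, pi v = pi w → v = w := by
    intro v w h
    exact (Fintype.equivFin V).injective (Fin.ext h)
  set Xr : Finset V := Xa.filter (fun x => pi x < pi (endp x)) with hXrdef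
  have hXr2 : 2 * Xr.card = Xa.card := by
    have himg : Xa \ Xr = Xr.image endp := by
      ext y
      constructor
      · intro hy
        obtain ⟨hyXa, hyn⟩ := Finset.mem_sdiff.1 hy
        rw [hXrdef, Finset.mem_filter] at hyn
        push_neg at hyn
        have hne : pi (endp y) ≠ pi y := fun h => hendne y hyXa (hpiinj _ _ h)
        have hlt : pi (endp y) < pi y := by
          have := hyn hyXa
          omega
        refine Finset.mem_image.2 ⟨endp y, ?_, (hrev y hyXa).2⟩
        rw [hXrdef, Finset.mem_filter]
        exact ⟨hendXa y hyXa, by rw [(hrev y hyXa).2]; exact hlt⟩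
      · intro hy
        obtain ⟨z, hz, rfl⟩ := Finset.mem_image.1 hy
        obtain ⟨hzXa, hzlt⟩ := Finset.mem_filter.1 (hXrdef ▸ hz)
        refine Finset.mem_sdiff.2 ⟨hendXa z hzXa, ?_⟩
        rw [hXrdef, Finset.mem_filter]
        rintro ⟨-, hlt⟩
        rw [(hrev z hzXa).2] at hlt
        omega
    have hXrsub : Xr ⊆ Xa := by rw [hXrdef]; exact Finset.filter_subset _ _
    have hcnt : (Xa \ Xr).card = Xr.card := by
      rw [himg]
      apply Finset.card_image_of_injOn
      intro a ha b hb hab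
      have haXa : a ∈ Xa := hXrsub ha
      have hbXa : b ∈ Xa := hXrsub hb
      have := (hrev a haXa).2
      rw [hab, (hrev b hbXa).2] at this
      exact this.symm
    have := Finset.card_sdiff_add_card_eq_card hXrsub
    omega
  -- the meet lemma
  have hmeet : ∀ x ∈ Xr, ∀ x' ∈ Xr, ∀ i < Aug18.len A B x, ∀ j < Aug18.len A B x',
      Aug18.vert A B x i = Aug18.vert A B x' j → x = x' := by
    intro x hxr x' hxr' i hi j hj hvij
    obtain ⟨hxXa, hxlt⟩ := Finset.mem_filter.1 (hXrdef ▸ hxr)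
    obtain ⟨hxXa', hxlt'⟩ := Finset.mem_filter.1 (hXrdef ▸ hxr')
    have hxX : x ∈ X := (Finset.mem_filter.1 (hXadef ▸ hxXa)).1
    have hxX' : x' ∈ X := (Finset.mem_filter.1 (hXadef ▸ hxXa')).1
    rcases Option.isSome_iff_exists.1 (Aug18.orb_lt_isSome (hex x hxX) hi) with ⟨u, hu⟩
    rcases Option.isSome_iff_exists.1 (Aug18.orb_lt_isSome (hex x' hxX') hj) with ⟨u', hu'⟩
    have hfst : u.1 = u'.1 := by
      rw [← Aug18.vert_eq hu, ← Aug18.vert_eq hu']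
      exact hvij
    by_cases hbb : u'.2 = u.2
    · have huu : u' = u := Prod.ext hfst.symm hbb
      subst huu
      rcases le_total i j with hij | hij
      · have hb := Aug18.orb_back hUA hUB hu hu' hij
        rcases Nat.eq_zero_or_pos (j - i) with h0 | h0
        · rw [h0, Aug18.orb_zero] at hb
          exact (Prod.ext_iff.1 (Option.some_injective _ hb).symm).1
        · exfalso
          have h1 : j - i - 1 + 1 = j - i := by omega
          rcases Aug18.orb_succ_some (h1 ▸ hb) with ⟨w, -, hw⟩
          exact hs0 x hxX w hw
      · have hb := Aug18.orb_back hUA hUB hu' hu hij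
        rcases Nat.eq_zero_or_pos (i - j) with h0 | h0
        · rw [h0, Aug18.orb_zero] at hb
          exact (Prod.ext_iff.1 (Option.some_injective _ hb)).1
        · exfalso
          have h1 : i - j - 1 + 1 = i - j := by omega
          rcases Aug18.orb_succ_some (h1 ▸ hb) with ⟨w, -, hw⟩
          exact hs0 x' hxX' w hw
    · exfalso
      have hcu : u' = Aug18.conj u := by
        refine Prod.ext hfst.symm ?_
        show u'.2 = !u.2
        cases h1 : u.2 with
        | false =>
          cases h2 : u'.2 with
          | false => exact absurd (h2.trans h1.symm) hbb
          | true => rfl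
        | true =>
          cases h2 : u'.2 with
          | false => rfl
          | true => exact absurd (h2.trans h1.symm) hbb
      have hc1 : Aug18.orb A B (Aug18.conj u) i = some (x, false) := by
        have := Aug18.orb_conj hUA hUB hu
        exact this
      have h2 : Aug18.orb A B (x', true) (j + i) = some (x, false) := by
        rw [Aug18.orb_add (x', true) j i (hcu ▸ hu')]
        exact hc1
      have h3 : Aug18.orb A B (x', true) (j + i + 1) = none := by
        rw [Aug18.orb_succ, h2, Option.bind_some]
        exact hstp_false x hxX
      have h4 : Aug18.len A B x' = j + i + 1 := by
        refine Aug18.len_eq (hex x' hxX') h3 ?_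
        intro k hk
        exact Option.isSome_iff_ne_none.1
          (Aug18.orb_isSome_of_le (by rw [h2]; rfl) k (by omega))
      have h5 : endp x' = x := by
        simp only [hendp]
        rw [h4]
        have : j + i + 1 - 1 = j + i := by omega
        rw [this]
        exact Aug18.vert_eq h2
      have h6 : endp x = x' := by
        have := (hrev x' hxXa').2
        rw [h5] at this
        exact this
      rw [h5] at hxlt'
      rw [h6] at hxlt
      omega
  -- M-edges of each path
  set F : V → Finset (Sym2 V) := fun x =>
    (Finset.range ((Aug18.len A B x - 1) / 2)).image
      (fun j => s(Aug18.vert A B x (2*j+1), Aug18.vert A B x (2*j+2))) with hFdef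
  have hXrX : ∀ x ∈ Xr, x ∈ X := by
    intro x hxr
    exact (Finset.mem_filter.1
      (hXadef ▸ (Finset.mem_filter.1 (hXrdef ▸ hxr)).1)).1
  have hFsub : ∀ x ∈ Xr, F x ⊆ M := by
    intro x hxr e he
    rw [hFdef] at he
    obtain ⟨j, hjmem, rfl⟩ := Finset.mem_image.1 he
    rw [Finset.mem_range] at hjmem
    have hxX := hXrX x hxr
    have hdiv : 2 * ((Aug18.len A B x - 1) / 2) ≤ Aug18.len A B x - 1 := by omega
    have hlt : (2*j+1) + 1 < Aug18.len A B x := by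
      have := hlen2 x hxX
      omega
    have hedge := Aug18.orb_edge (hex x hxX) hlt
    have hodd : ¬ Even (2*j+1) := by rintro ⟨m, hm⟩; omega
    rw [if_neg hodd] at hedge
    have h22 : 2*j+1+1 = 2*j+2 := rfl
    rw [h22] at hedge
    exact (Finset.mem_sdiff.1 hedge).1
  have hvinj : ∀ x ∈ X, ∀ i < Aug18.len A B x, ∀ i' < Aug18.len A B x,
      Aug18.vert A B x i = Aug18.vert A B x i' → i = i' := by
    intro x hx i hi i' hi' hv
    rcases Option.isSome_iff_exists.1 (Aug18.orb_lt_isSome (hex x hx) hi) with ⟨u, hu⟩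
    rcases Option.isSome_iff_exists.1 (Aug18.orb_lt_isSome (hex x hx) hi') with ⟨u', hu'⟩
    refine Aug18.orb_fst_inj hUA hUB (hs0 x hx) hu hu' ?_
    rw [← Aug18.vert_eq hu, ← Aug18.vert_eq hu']
    exact hv
  have hFcard : ∀ x ∈ Xr, (F x).card = (Aug18.len A B x - 1) / 2 := by
    intro x hxr
    have hxX := hXrX x hxr
    rw [hFdef]
    rw [Finset.card_image_of_injOn, Finset.card_range]
    intro j hj j' hj' heq
    rw [Finset.mem_coe, Finset.mem_range] at hj hj'
    have hdiv : 2 * ((Aug18.len A B x - 1) / 2) ≤ Aug18.len A B x - 1 := by omega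
    have hb1 : 2*j+1 < Aug18.len A B x := by have := hlen2 x hxX; omega
    have hb2 : 2*j+2 < Aug18.len A B x := by have := hlen2 x hxX; omega
    have hb1' : 2*j'+1 < Aug18.len A B x := by have := hlen2 x hxX; omega
    have hb2' : 2*j'+2 < Aug18.len A B x := by have := hlen2 x hxX; omega
    rcases Sym2.eq_iff.1 heq with ⟨h1, -⟩ | ⟨h1, -⟩
    · have := hvinj x hxX _ hb1 _ hb1' h1
      omega
    · have := hvinj x hxX _ hb1 _ hb2' h1
      omega
  have hFdisj : ∀ x ∈ Xr, ∀ x' ∈ Xr, x ≠ x' → Disjoint (F x) (F x') := by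
    intro x hxr x' hxr' hne
    rw [Finset.disjoint_left]
    intro e he he'
    apply hne
    rw [hFdef] at he he'
    obtain ⟨j, hjmem, rfl⟩ := Finset.mem_image.1 he
    obtain ⟨j', hjmem', heq⟩ := Finset.mem_image.1 he'
    rw [Finset.mem_range] at hjmem hjmem'
    have hxX := hXrX x hxr
    have hxX' := hXrX x' hxr'
    have hdiv : 2 * ((Aug18.len A B x - 1) / 2) ≤ Aug18.len A B x - 1 := by omega
    have hdiv' : 2 * ((Aug18.len A B x' - 1) / 2) ≤ Aug18.len A B x' - 1 := by omega
    have hb1 : 2*j+1 < Aug18.len A B x := by have := hlen2 x hxX; omega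
    have hb2 : 2*j+2 < Aug18.len A B x := by have := hlen2 x hxX; omega
    have hb1' : 2*j'+1 < Aug18.len A B x' := by have := hlen2 x' hxX'; omega
    rcases Sym2.eq_iff.1 heq with ⟨h1, -⟩ | ⟨h1, -⟩
    · exact (hmeet x' hxr' x hxr _ hb1' _ hb1 h1).symm
    · exact (hmeet x' hxr' x hxr _ hb1' _ hb2 h1).symm
  have hFdisj2 : ∀ x ∈ Xr, ∀ x' ∈ Xr, x ≠ x' → Disjoint (F x) (F x') := hFdisj
  set Xlong : Finset V :=
    Xr.filter (fun x => (8 / ε + 1 : ℝ) < (Aug18.len A B x : ℝ) - 1) with hXldef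
  have hXlsub : Xlong ⊆ Xr := by rw [hXldef]; exact Finset.filter_subset _ _
  have hlong : (Xlong.card : ℝ) * (4 / ε) ≤ (M.card : ℝ) := by
    have hcardU : (Xlong.biUnion F).card = ∑ x ∈ Xlong, (F x).card :=
      Finset.card_biUnion (fun a ha b hb hab => hFdisj a (hXlsub ha) b (hXlsub hb) hab)
    have hsubM : Xlong.biUnion F ⊆ M :=
      Finset.biUnion_subset.2 fun x hx => hFsub x (hXlsub hx)
    have hsum : ∑ x ∈ Xlong, (F x).card ≤ M.card := by
      rw [← hcardU]
      exact Finset.card_le_card hsubM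
    have hper : ∀ x ∈ Xlong, (4 / ε : ℝ) ≤ ((F x).card : ℝ) := by
      intro x hx
      obtain ⟨hxr, hlen⟩ := Finset.mem_filter.1 (hXldef ▸ hx)
      rw [hFcard x hxr]
      have hxX := hXrX x hxr
      have h2 := hlen2 x hxX
      set q := (Aug18.len A B x - 1) / 2 with hq
      have hqb : Aug18.len A B x - 1 ≤ 2 * q + 1 := by omega
      have hcast : ((Aug18.len A B x - 1 : ℕ) : ℝ) = (Aug18.len A B x : ℝ) - 1 := by
        push_cast [Nat.cast_sub (by omega : 1 ≤ Aug18.len A B x)]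
        ring
      have hcast2 : ((Aug18.len A B x - 1 : ℕ) : ℝ) ≤ 2 * (q : ℝ) + 1 := by
        exact_mod_cast hqb
      rw [hcast] at hcast2
      have h8 : (8:ℝ)/ε = 2*(4/ε) := by ring
      linarith
    have hlow : (Xlong.card : ℝ) * (4 / ε) ≤ ∑ x ∈ Xlong, ((F x).card : ℝ) := by
      calc (Xlong.card : ℝ) * (4 / ε) = ∑ _x ∈ Xlong, (4 / ε : ℝ) := by
            rw [Finset.sum_const, nsmul_eq_mul]
        _ ≤ ∑ x ∈ Xlong, ((F x).card : ℝ) := Finset.sum_le_sum hper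
    calc (Xlong.card : ℝ) * (4 / ε) ≤ ∑ x ∈ Xlong, ((F x).card : ℝ) := hlow
      _ = ((∑ x ∈ Xlong, (F x).card : ℕ) : ℝ) := by push_cast; ring
      _ ≤ (M.card : ℝ) := by exact_mod_cast hsum
  set Xs : Finset V := Xr \ Xlong with hXsdef
  have hXscard : (Xs.card : ℝ) = (Xr.card : ℝ) - (Xlong.card : ℝ) := by
    rw [hXsdef, Finset.card_sdiff_of_subset (Finset.filter_subset _ _)]
    rw [Nat.cast_sub (Finset.card_le_card (Finset.filter_subset _ _))]
  -- the paths
  set S : Finset (List V) := Xs.image (Aug18.pth A B) with hSdef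
  have hXsX : ∀ x ∈ Xs, x ∈ X := by
    intro x hx
    rw [hXsdef] at hx
    exact (Finset.mem_filter.1 (Finset.mem_filter.1 (Finset.mem_sdiff.1 hx).1).1).1
  have hScard : S.card = Xs.card := by
    rw [hSdef]
    apply Finset.card_image_of_injOn
    intro x hx x' hx' h
    have h1 : 0 < (Aug18.pth A B x).length := by
      rw [Aug18.pth_length]
      have := hlen2 x (hXsX x hx); omega
    have h2 : 0 < (Aug18.pth A B x').length := by
      rw [Aug18.pth_length]
      have := hlen2 x' (hXsX x' hx'); omega
    have e1 := Aug18.pth_get (A := A) (B := B) (x := x) h1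
    rw [Aug18.vert_zero] at e1
    have e2 := Aug18.pth_get (A := A) (B := B) (x := x') h2
    rw [Aug18.vert_zero] at e2
    rw [List.get_eq_getElem] at e1 e2
    rw [List.getElem_of_eq h] at e1
    exact e1.symm.trans e2
  refine ⟨S, ?_, ?_, ?_⟩
  · -- cardinality bound
    have hXrM : Mstar.card ≤ Xr.card + M.card := by omega
    have hMle : M.card ≤ Mstar.card := hmax M ⟨hME, hMD⟩
    have hXlong_le : (Xlong.card : ℝ) ≤ (Mstar.card : ℝ) * (ε/4) := by
      have hpos : (0:ℝ) < ε/4 := by positivity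
      have h1 := mul_le_mul_of_nonneg_right hlong (le_of_lt hpos)
      have h2 : (Xlong.card : ℝ) * (4/ε) * (ε/4) = Xlong.card := by
          rw [mul_assoc, div_mul_div_comm, mul_comm (4:ℝ) ε, div_self (by positivity), mul_one]
      rw [h2] at h1
      have h3 : (M.card:ℝ) ≤ Mstar.card := by exact_mod_cast hMle
      have h4 := mul_le_mul_of_nonneg_right h3 (le_of_lt hpos)
      linarith
    rw [hScard, hXscard]
    have hXrR : (Mstar.card : ℝ) ≤ (Xr.card : ℝ) + M.card := by exact_mod_cast hXrM
    have r1 : (ε/2) * (Mstar.card:ℝ) = 2 * ((Mstar.card:ℝ) * (ε/4)) := by ring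
    have r2 : (ε/4) * (Mstar.card:ℝ) = (Mstar.card:ℝ) * (ε/4) := by ring
    linarith
  · -- each element is a short augmenting path
    intro vs hvs
    rw [hSdef] at hvs
    obtain ⟨x, hxs, rfl⟩ := Finset.mem_image.1 hvs
    have hxr : x ∈ Xr := (Finset.mem_sdiff.1 (hXsdef ▸ hxs)).1
    have hnl : x ∉ Xlong := (Finset.mem_sdiff.1 (hXsdef ▸ hxs)).2
    have hxXa : x ∈ Xa := (Finset.mem_filter.1 (hXrdef ▸ hxr)).1
    have hxX : x ∈ X := hXrX x hxr
    obtain ⟨-, hev⟩ := Finset.mem_filter.1 (hXadef ▸ hxXa)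
    have hl2 := hlen2 x hxX
    have hlength : (Aug18.pth A B x).length = Aug18.len A B x := Aug18.pth_length
    constructor
    · refine ⟨by rw [hlength]; exact hl2,
        Aug18.pth_nodup hUA hUB (hex x hxX) (hs0 x hxX),
        by rw [hlength]; exact hev, ?_, ?_, ?_, ?_⟩
      · -- edges in G
        intro e he
        obtain ⟨i, h1, h2, rfl⟩ := Aug18.mem_pathEdges he
        rw [Aug18.pth_get h1, Aug18.pth_get h2]
        rw [hlength] at h2
        have hedge := Aug18.orb_edge (hex x hxX) h2
        by_cases hp : Even i
        · rw [if_pos hp] at hedge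
          exact hMsE _ (Finset.mem_sdiff.1 hedge).1
        · rw [if_neg hp] at hedge
          exact hME _ (Finset.mem_sdiff.1 hedge).1
      · -- alternation
        intro i hilt
        have hple := Aug18.pathEdges_length (Aug18.pth A B x)
        have hle : i < Aug18.len A B x - 1 := by
          rw [hlength] at hple; omega
        have h1 : i < (Aug18.pth A B x).length := by rw [hlength]; omega
        have h2 : i + 1 < (Aug18.pth A B x).length := by rw [hlength]; omega
        rw [Aug18.pathEdges_get _ hilt h1 h2, Aug18.pth_get h1, Aug18.pth_get h2]
        have h2' : i + 1 < Aug18.len A B x := by rw [hlength] at h2; exact h2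
        have hedge := Aug18.orb_edge (hex x hxX) h2'
        by_cases hp : Even i
        · rw [if_pos hp] at hedge
          refine iff_of_false (fun hMm => (Finset.mem_sdiff.1 hedge).2 hMm) ?_
          rw [Nat.not_odd_iff_even]
          exact hp
        · rw [if_neg hp] at hedge
          exact iff_of_true (Finset.mem_sdiff.1 hedge).1 (Nat.not_even_iff_odd.1 hp)
      · -- head unmatched
        intro y hy
        have hpos : 0 < (Aug18.pth A B x).length := by rw [hlength]; omega
        rw [Aug18.head?_eq_get hpos, Option.mem_def] at hy
        have h0 := Option.some_injective _ hy
        rw [Aug18.pth_get hpos, Aug18.vert_zero] at h0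
        intro e he hye
        rw [← h0] at hye
        exact (hmemX.1 hxX).2 e he hye
      · -- last unmatched
        intro y hy
        have hpos : 0 < (Aug18.pth A B x).length := by rw [hlength]; omega
        rw [Aug18.getLast?_eq_get hpos, Option.mem_def] at hy
        have h0 := Option.some_injective _ hy
        have hidx : (Aug18.pth A B x).length - 1 < (Aug18.pth A B x).length := by omega
        rw [Aug18.pth_get hidx] at h0
        have hyend : y = endp x := by
          rw [← h0]
          simp only [hendp]
          rw [hlength]
        have hzX : endp x ∈ X := heven_end x hxX hev
        intro e he hye
        rw [hyend] at hye
        exact (hmemX.1 hzX).2 e he hye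
    · -- length bound
      rw [hlength]
      rw [hXldef, Finset.mem_filter] at hnl
      push_neg at hnl
      exact not_lt.1 (by simpa using hnl hxr)
  · -- vertex disjointness
    intro vs hvs ws hws hne y hyv hyw
    rw [hSdef] at hvs hws
    obtain ⟨x, hxs, rfl⟩ := Finset.mem_image.1 hvs
    obtain ⟨x', hxs', rfl⟩ := Finset.mem_image.1 hws
    have hxr : x ∈ Xr := (Finset.mem_sdiff.1 (hXsdef ▸ hxs)).1
    have hxr' : x' ∈ Xr := (Finset.mem_sdiff.1 (hXsdef ▸ hxs')).1
    simp only [Aug18.pth, List.mem_map, List.mem_range] at hyv hyw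
    obtain ⟨i, hi, hvi⟩ := hyv
    obtain ⟨j, hj, hvj⟩ := hyw
    have := hmeet x hxr x' hxr' i hi j hj (by rw [hvi, hvj])
    exact hne (by rw [this])
end
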